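/- arXiv:1211.2912 — 2 statements merged into one kernel-verified Lean document; each statement's English description precedes it below -/
import Mathlib

section
/- The identity K-matrix K̄^{(1)}(z) = id (that is, κ_j(z) = 1 for all 1 ≤ j ≤ n) satisfies the graded boundary Yang–Baxter equation: for all q ∈ ℂ∖{0} and all z1, z2 ∈ ℂ∖{0} with 1 − q²z1z2 ≠ 0 and 1 − q²z1/z2 ≠ 0, and for all i1, i2, l1, l2 ∈ {1,…,n}, Σ_{j,k=1}^{n} R̄(z1z2)_{i1,i2}^{j,k} R̄(z1/z2)_{k,j}^{l2,l1} = Σ_{j,k=1}^{n} R̄(z1/z2)_{i1,i2}^{j,k} R̄(z1z2)_{k,j}^{l2,l1}. -/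
/-!
`R̄(z)` conserves the multiset of indices: `R̄(z)_{a,b}^{j,k} = 0` unless `{j, k} = {a, b}`.
Hence each side of the equation collapses to at most two terms, and it suffices to show that the
sum `S(u, v) = Σ_{j,k} R̄(u)_{i1,i2}^{j,k} R̄(v)_{k,j}^{l2,l1}` is symmetric in `u` and `v`.
The surviving terms are either products of two entries of the same kind, which commute, or the
exchange combination `b(u) c(v) + c(u) b(v)` of a transmission and a reflection amplitude, where
the factor `z` carried by the reflection amplitude below the diagonal makes it equal to
`± q (1 - q²) (1 - u v) / ((1 - q² u) (1 - q² v))`, which is symmetric.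
-/

noncomputable section

/-- The `ℤ₂`-grading: `[j] = 1` for `1 ≤ j ≤ M+1` (0-based: `j.val ≤ M`), `0` otherwise. -/
def gr (M : ℕ) {n : ℕ} (j : Fin n) : ℕ := if (j : ℕ) ≤ M then 1 else 0

/-- Matrix entries `R̄(z)_{k1,k2}^{j1,j2}` of the `U_q(ŝl(M+1|N+1))` R-matrix
(without scalar normalization); lower indices = output, upper indices = input. -/
def Rent (M N : ℕ) (q z : ℂ) (k1 k2 j1 j2 : Fin (M + N + 2)) : ℂ :=
  if k1 = j1 ∧ k2 = j2 ∧ j1 = j2 then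
    (if (j1 : ℕ) ≤ M then (-1 : ℂ) else -(q ^ 2 - z) / (1 - q ^ 2 * z))
  else if k1 = j1 ∧ k2 = j2 then (1 - z) * q / (1 - q ^ 2 * z)
  else if k1 = j2 ∧ k2 = j1 then
    (if (k1 : ℕ) < (k2 : ℕ) then
        (-1 : ℂ) ^ (gr M k1 * gr M k2) * (1 - q ^ 2) / (1 - q ^ 2 * z)
      else (-1 : ℂ) ^ (gr M k1 * gr M k2) * (1 - q ^ 2) * z / (1 - q ^ 2 * z))
  else 0

theorem Finset.sum_sum_eq_sum_pair_of_eq_zero {ι α : Type*} [Fintype ι] [DecidableEq ι]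
    [AddCommMonoid α] (f : ι → ι → α) (a b : ι)
    (hf : ∀ j k, ¬((j = a ∧ k = b) ∨ (j = b ∧ k = a)) → f j k = 0) :
    ∑ j, ∑ k, f j k = ∑ p ∈ {(a, b), (b, a)}, f p.1 p.2 := by
  rw [← Fintype.sum_prod_type']
  refine (Finset.sum_subset (Finset.subset_univ _) fun p _ hp => hf p.1 p.2 ?_).symm
  rintro (⟨h1, h2⟩ | ⟨h1, h2⟩) <;> simp [Prod.ext_iff, h1, h2] at hp

section

variable {M N : ℕ} {q z : ℂ} {a b j k : Fin (M + N + 2)}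

theorem Rent_eq_zero (h : ¬((j = a ∧ k = b) ∨ (j = b ∧ k = a))) :
    Rent M N q z a b j k = 0 := by
  unfold Rent
  split_ifs <;> tauto

theorem Rent_apply_same (hab : a ≠ b) :
    Rent M N q z a b a b = (1 - z) * q / (1 - q ^ 2 * z) := by
  unfold Rent
  split_ifs <;> tauto

theorem Rent_apply_swap_of_lt (hab : (a : ℕ) < b) :
    Rent M N q z a b b a = (-1) ^ (gr M a * gr M b) * (1 - q ^ 2) / (1 - q ^ 2 * z) := by
  have : a ≠ b := Fin.ne_of_lt hab
  unfold Rent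
  split_ifs <;> tauto

theorem Rent_apply_swap_of_gt (hab : (b : ℕ) < a) :
    Rent M N q z a b b a = (-1) ^ (gr M a * gr M b) * (1 - q ^ 2) * z / (1 - q ^ 2 * z) := by
  have : a ≠ b := Fin.ne_of_gt hab
  unfold Rent
  split_ifs <;> first | tauto | omega

theorem Rent_exchange (u v : ℂ) (hab : a ≠ b) :
    Rent M N q u a b a b * Rent M N q v b a a b + Rent M N q u a b b a * Rent M N q v a b a b
      = (-1) ^ (gr M a * gr M b) * q * (1 - q ^ 2) * (1 - u * v)
          / (1 - q ^ 2 * u) / (1 - q ^ 2 * v) := by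
  rw [Rent_apply_same hab, Rent_apply_same hab]
  rcases lt_or_gt_of_ne (Fin.val_ne_of_ne hab) with hlt | hgt
  · rw [Rent_apply_swap_of_gt hlt, Rent_apply_swap_of_lt hlt, mul_comm (gr M b)]
    ring
  · rw [Rent_apply_swap_of_lt hgt, Rent_apply_swap_of_gt hgt, mul_comm (gr M b)]
    ring

end

theorem sum_Rent_mul_Rent_comm (M N : ℕ) (q u v : ℂ) (i1 i2 l1 l2 : Fin (M + N + 2)) :
    ∑ j, ∑ k, Rent M N q u i1 i2 j k * Rent M N q v k j l2 l1
      = ∑ j, ∑ k, Rent M N q v i1 i2 j k * Rent M N q u k j l2 l1 := by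
  have hweight : ∀ (w w' : ℂ) j k, ¬((j = i1 ∧ k = i2) ∨ (j = i2 ∧ k = i1)) →
      Rent M N q w i1 i2 j k * Rent M N q w' k j l2 l1 = 0 := fun w w' j k h => by
    rw [Rent_eq_zero h, zero_mul]
  rw [Finset.sum_sum_eq_sum_pair_of_eq_zero _ i1 i2 (hweight u v),
    Finset.sum_sum_eq_sum_pair_of_eq_zero _ i1 i2 (hweight v u)]
  by_cases hi : i1 = i2
  · subst hi
    simp only [Finset.pair_eq_singleton, Finset.sum_singleton]
    by_cases hl : l2 = i1 ∧ l1 = i1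
    · obtain ⟨rfl, rfl⟩ := hl
      exact mul_comm _ _
    · have hvanish : ∀ w, Rent M N q w i1 i1 l2 l1 = 0 := fun w => Rent_eq_zero (by tauto)
      rw [hvanish, hvanish, mul_zero, mul_zero]
  have hpair : (i1, i2) ≠ (i2, i1) := by simp [Prod.ext_iff, hi]
  simp only [Finset.sum_pair hpair]
  by_cases hdiag : l2 = i2 ∧ l1 = i1
  · obtain ⟨rfl, rfl⟩ := hdiag
    rw [Rent_apply_same hi, Rent_apply_same hi,
      Rent_apply_same (Ne.symm hi), Rent_apply_same (Ne.symm hi)]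
    ring
  by_cases hswap : l2 = i1 ∧ l1 = i2
  · obtain ⟨rfl, rfl⟩ := hswap
    rw [Rent_exchange u v hi, Rent_exchange v u hi, mul_comm u v]
    ring
  have hvanish12 : ∀ w, Rent M N q w i1 i2 l2 l1 = 0 := fun w => Rent_eq_zero (by tauto)
  have hvanish21 : ∀ w, Rent M N q w i2 i1 l2 l1 = 0 := fun w => Rent_eq_zero (by tauto)
  simp only [hvanish12, hvanish21, mul_zero, add_zero]

theorem identity_Kmatrix_boundaryYangBaxter_general (M N : ℕ) (q : ℂ)
    (z1 z2 : ℂ)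
    (i1 i2 l1 l2 : Fin (M + N + 2)) :
    (∑ j : Fin (M + N + 2), ∑ k : Fin (M + N + 2),
      Rent M N q (z1 * z2) i1 i2 j k * Rent M N q (z1 / z2) k j l2 l1)
    = ∑ j : Fin (M + N + 2), ∑ k : Fin (M + N + 2),
      Rent M N q (z1 / z2) i1 i2 j k * Rent M N q (z1 * z2) k j l2 l1 :=
  sum_Rent_mul_Rent_comm M N q (z1 * z2) (z1 / z2) i1 i2 l1 l2

/-- The identity K-matrix `K̄^{(1)}(z) = id` satisfies the graded boundary
Yang–Baxter equation (in components, with all `κ_j = 1`). -/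
theorem identity_Kmatrix_boundaryYangBaxter (M N : ℕ) (hMN : M ≠ N) (q : ℂ) (hq : q ≠ 0)
    (z1 z2 : ℂ) (hz1 : z1 ≠ 0) (hz2 : z2 ≠ 0)
    (ha : 1 - q ^ 2 * (z1 * z2) ≠ 0) (hb : 1 - q ^ 2 * (z1 / z2) ≠ 0)
    (i1 i2 l1 l2 : Fin (M + N + 2)) :
    (∑ j : Fin (M + N + 2), ∑ k : Fin (M + N + 2),
      Rent M N q (z1 * z2) i1 i2 j k * Rent M N q (z1 / z2) k j l2 l1)
    = ∑ j : Fin (M + N + 2), ∑ k : Fin (M + N + 2),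
      Rent M N q (z1 / z2) i1 i2 j k * Rent M N q (z1 * z2) k j l2 l1 :=
  identity_Kmatrix_boundaryYangBaxter_general M N q z1 z2 i1 i2 l1 l2
end
end

section
/- Ratio form of the diagonal boundary relation: fix 1 ≤ j < k ≤ n, q ∈ ℂ∖{0} with q² ≠ 1, and z1, z2 ∈ ℂ∖{0} with 1 − q²z1z2 ≠ 0 and 1 − q²z1/z2 ≠ 0. Let a_j, a_k, b_j, b_k ∈ ℂ with a_k ≠ 0 and b_k ≠ 0, and write κ_j(z1) = a_j, κ_k(z1) = a_k, κ_j(z2) = b_j, κ_k(z2) = b_k. Then the relation R̄(z1/z2)_{j,k}^{j,k}·( R̄(z1z2)_{k,j}^{j,k}·a_k b_k − R̄(z1z2)_{j,k}^{k,j}·a_j b_j ) + R̄(z1z2)_{j,k}^{j,k}·( R̄(z1/z2)_{j,k}^{k,j}·b_k a_j − R̄(z1/z2)_{k,j}^{j,k}·a_k b_j ) = 0 holds if and only if (1 − z1/z2)·(z1 z2 − (a_j/a_k)(b_j/b_k)) + (1 − z1 z2)·((a_j/a_k) − (z1/z2)(b_j/b_k)) = 0. -/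
noncomputable section

/-!
Only `R̄(z)_{j,k}^{j,k} = (1 - z) q / (1 - q² z)` and the two exchange entries enter, and for
`j < k` the latter carry the same sign `s = (-1)^([j][k])`. Substituting them turns the relation
into the ratio form times `s q (1 - q²) a_k b_k / ((1 - q² z1 z2)(1 - q² z1/z2))`, which is nonzero.
-/

section Entries

variable {M N : ℕ} {q z : ℂ} {i l : Fin (M + N + 2)}

theorem Rent_offDiag_apply (h : i ≠ l) :
    Rent M N q z i l i l = (1 - z) * q / (1 - q ^ 2 * z) := by
  simp [Rent, h]

theorem Rent_swap_of_lt (h : i < l) :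
    Rent M N q z i l l i = (-1) ^ (gr M i * gr M l) * (1 - q ^ 2) / (1 - q ^ 2 * z) := by
  simp [Rent, h.ne, h.ne', Fin.lt_def.mp h]

theorem Rent_swap_of_gt (h : i < l) :
    Rent M N q z l i i l = (-1) ^ (gr M i * gr M l) * (1 - q ^ 2) * z / (1 - q ^ 2 * z) := by
  simp [Rent, h.ne, h.ne', (Fin.lt_def.mp h).not_gt, Nat.mul_comm (gr M l)]

end Entries

theorem pairCombination_eq_mul_ratioForm {K : Type*} [Field K] {s q u w : K} (aj bj : K)
    {ak bk : K} (hak : ak ≠ 0) (hbk : bk ≠ 0) :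
    (1 - w) * q / (1 - q ^ 2 * w) *
          (s * (1 - q ^ 2) * u / (1 - q ^ 2 * u) * (ak * bk)
            - s * (1 - q ^ 2) / (1 - q ^ 2 * u) * (aj * bj))
        + (1 - u) * q / (1 - q ^ 2 * u) *
          (s * (1 - q ^ 2) / (1 - q ^ 2 * w) * (bk * aj)
            - s * (1 - q ^ 2) * w / (1 - q ^ 2 * w) * (ak * bj))
      = s * q * (1 - q ^ 2) * (ak * bk) / ((1 - q ^ 2 * u) * (1 - q ^ 2 * w)) *
        ((1 - w) * (u - aj / ak * (bj / bk)) + (1 - u) * (aj / ak - w * (bj / bk))) := by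
  field_simp

theorem pairRelation_iff_ratioForm_general (M N : ℕ)
    (j k : Fin (M + N + 2)) (hjk : j < k) (q : ℂ) (hq : q ≠ 0) (hq2 : q ^ 2 ≠ 1)
    (z1 z2 : ℂ)
    (ha : 1 - q ^ 2 * (z1 * z2) ≠ 0) (hb : 1 - q ^ 2 * (z1 / z2) ≠ 0)
    (aj ak bj bk : ℂ) (hak : ak ≠ 0) (hbk : bk ≠ 0) :
    (Rent M N q (z1 / z2) j k j k *
        (Rent M N q (z1 * z2) k j j k * (ak * bk)
          - Rent M N q (z1 * z2) j k k j * (aj * bj))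
      + Rent M N q (z1 * z2) j k j k *
        (Rent M N q (z1 / z2) j k k j * (bk * aj)
          - Rent M N q (z1 / z2) k j j k * (ak * bj)) = 0)
    ↔ (1 - z1 / z2) * (z1 * z2 - (aj / ak) * (bj / bk))
        + (1 - z1 * z2) * ((aj / ak) - (z1 / z2) * (bj / bk)) = 0 := by
  simp only [Rent_offDiag_apply hjk.ne, Rent_swap_of_lt hjk, Rent_swap_of_gt hjk]
  rw [pairCombination_eq_mul_ratioForm aj bj hak hbk]
  have hsign : (-1 : ℂ) ^ (gr M j * gr M k) ≠ 0 := pow_ne_zero _ (neg_ne_zero.mpr one_ne_zero)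
  have hq2' : 1 - q ^ 2 ≠ 0 := sub_ne_zero.mpr hq2.symm
  simp [hsign, hq, hq2', hak, hbk, ha, hb]

/-- Ratio form of the diagonal boundary relation for a fixed pair `j < k`. -/
theorem pairRelation_iff_ratioForm (M N : ℕ) (hMN : M ≠ N)
    (j k : Fin (M + N + 2)) (hjk : j < k) (q : ℂ) (hq : q ≠ 0) (hq2 : q ^ 2 ≠ 1)
    (z1 z2 : ℂ) (hz1 : z1 ≠ 0) (hz2 : z2 ≠ 0)
    (ha : 1 - q ^ 2 * (z1 * z2) ≠ 0) (hb : 1 - q ^ 2 * (z1 / z2) ≠ 0)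
    (aj ak bj bk : ℂ) (hak : ak ≠ 0) (hbk : bk ≠ 0) :
    (Rent M N q (z1 / z2) j k j k *
        (Rent M N q (z1 * z2) k j j k * (ak * bk)
          - Rent M N q (z1 * z2) j k k j * (aj * bj))
      + Rent M N q (z1 * z2) j k j k *
        (Rent M N q (z1 / z2) j k k j * (bk * aj)
          - Rent M N q (z1 / z2) k j j k * (ak * bj)) = 0)
    ↔ (1 - z1 / z2) * (z1 * z2 - (aj / ak) * (bj / bk))
        + (1 - z1 * z2) * ((aj / ak) - (z1 / z2) * (bj / bk)) = 0 :=
  pairRelation_iff_ratioForm_general M N j k hjk q hq hq2 z1 z2 ha hb aj ak bj bk hak hbk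
end
end
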